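/- arXiv:1911.03714 — 5 statements merged into one kernel-verified Lean document; each statement's English description precedes it below -/
import Mathlib

section
/- For all t ≥ τ ≥ t₀ one has 2·ln‖Φ(t,τ)‖_I ≤ ∫_τ^t λ_max[A(s)ᵀ + A(s)] ds. -/
open scoped Matrix
open scoped Matrix.Norms.L2Operator  -- `‖·‖` on matrices is the operator norm induced by the Euclidean norm
open Set

/-- The largest (real) eigenvalue of a matrix, as the supremum of its real spectrum.
For a real symmetric matrix this is `λ_max`. -/
noncomputable def lambdaMax {n : ℕ} (M : Matrix (Fin n) (Fin n) ℝ) : ℝ :=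
  sSup (spectrum ℝ M)

/-!
Along a solution `x` of `ẋ = A(t)x` the energy `‖x‖²` has derivative `⟪(Aᵀ + A)x, x⟫`, which the
Rayleigh bound squeezes between `-‖Aᵀ + A‖ ‖x‖²` and `λ_max[Aᵀ + A] ‖x‖²`. Grönwall's argument
(monotonicity of `‖x‖² · exp(-∫ f)`) turns these into
`‖x(τ)‖² exp(-∫ ‖Aᵀ + A‖) ≤ ‖x(t)‖² ≤ ‖x(τ)‖² exp(∫ λ_max[Aᵀ + A])`. Applied to `x(s) = Φ(s,τ) y`,
the upper bound gives `‖Φ(t,τ)‖² ≤ exp(∫ λ_max[Aᵀ + A])`, and the lower bound shows `Φ(t,τ) ≠ 0`,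
so that the logarithm is not the junk value `log 0 = 0`.
-/

open Matrix Module.End Real
open scoped RealInnerProductSpace

theorem hasDerivAt_integral_of_continuousOn {f : ℝ → ℝ} {a b s : ℝ}
    (hf : ContinuousOn f (Icc a b)) (hs : s ∈ Ioo a b) :
    HasDerivAt (fun u => ∫ v in a..u, f v) (f s) s :=
  intervalIntegral.integral_hasDerivAt_right
    ((hf.mono (Icc_subset_Icc_right hs.2.le)).intervalIntegrable_of_Icc hs.1.le)
    ((hf.mono Ioo_subset_Icc_self).stronglyMeasurableAtFilter isOpen_Ioo s hs)
    (hf.continuousAt (Icc_mem_nhds hs.1 hs.2))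

theorem mul_exp_integral_le_of_mul_le_deriv {f g g' : ℝ → ℝ} {a b : ℝ} (hab : a ≤ b)
    (hf : ContinuousOn f (Icc a b)) (hg : ContinuousOn g (Icc a b))
    (hg' : ∀ s ∈ Ioo a b, HasDerivAt g (g' s) s) (hle : ∀ s ∈ Ioo a b, f s * g s ≤ g' s) :
    g a * exp (∫ s in a..b, f s) ≤ g b := by
  set F : ℝ → ℝ := fun u => ∫ v in a..u, f v
  have hF : ContinuousOn F (Icc a b) := by
    simpa only [uIcc_of_le hab] using intervalIntegral.continuousOn_primitive_interval
      (a := a) (b := b) (by simpa only [uIcc_of_le hab] using hf.integrableOn_Icc)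
  have hmono : MonotoneOn (fun u => g u * exp (-F u)) (Icc a b) := by
    refine monotoneOn_of_hasDerivWithinAt_nonneg (convex_Icc a b) (hg.mul hF.neg.rexp)
      (fun s hs => ?_) (fun s hs => ?_) (f' := fun s => (g' s - f s * g s) * exp (-F s))
    · rw [interior_Icc] at hs ⊢
      exact ((hg' s hs).fun_mul (hasDerivAt_integral_of_continuousOn hf hs).fun_neg.exp
        |>.congr_deriv (by ring)).hasDerivWithinAt
    · rw [interior_Icc] at hs
      exact mul_nonneg (sub_nonneg.mpr (hle s hs)) (exp_pos _).le
  have hab' := hmono (left_mem_Icc.mpr hab) (right_mem_Icc.mpr hab) hab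
  simp only [F, intervalIntegral.integral_same, neg_zero, exp_zero, mul_one] at hab'
  calc g a * exp (F b) ≤ g b * exp (-F b) * exp (F b) := by gcongr
    _ = g b := by rw [mul_assoc, ← exp_add, neg_add_cancel, exp_zero, mul_one]

theorem le_mul_exp_integral_of_deriv_le_mul {f g g' : ℝ → ℝ} {a b : ℝ} (hab : a ≤ b)
    (hf : ContinuousOn f (Icc a b)) (hg : ContinuousOn g (Icc a b))
    (hg' : ∀ s ∈ Ioo a b, HasDerivAt g (g' s) s) (hle : ∀ s ∈ Ioo a b, g' s ≤ f s * g s) :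
    g b ≤ g a * exp (∫ s in a..b, f s) := by
  have := mul_exp_integral_le_of_mul_le_deriv hab hf hg.neg (fun s hs => (hg' s hs).neg)
    (fun s hs => by simpa only [Pi.neg_apply, mul_neg, neg_le_neg_iff] using hle s hs)
  simpa only [Pi.neg_apply, neg_mul, neg_le_neg_iff] using this

theorem ContinuousLinearMap.opNorm_sq_le_of_norm_sq_le {E F : Type*} [NormedAddCommGroup E]
    [NormedSpace ℝ E] [NormedAddCommGroup F] [NormedSpace ℝ F] {T : E →L[ℝ] F} {c : ℝ}
    (hc : 0 ≤ c) (h : ∀ y, ‖T y‖ ^ 2 ≤ c * ‖y‖ ^ 2) : ‖T‖ ^ 2 ≤ c := by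
  have hT : ‖T‖ ≤ √c := T.opNorm_le_bound (Real.sqrt_nonneg c) fun y => by
    simpa [Real.sqrt_mul hc, Real.sqrt_sq (norm_nonneg _)] using Real.sqrt_le_sqrt (h y)
  simpa [Real.sq_sqrt hc] using pow_le_pow_left₀ (norm_nonneg T) hT 2

theorem isHermitian_transpose_add_self_real {ι : Type*} (B : Matrix ι ι ℝ) :
    (Bᵀ + B).IsHermitian := by
  simpa only [conjTranspose_eq_transpose_of_trivial] using isHermitian_transpose_add_self B

section QuadraticForm

variable {ι : Type*} [Fintype ι] [DecidableEq ι]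

theorem inner_toEuclideanCLM_transpose_add_self (B : Matrix ι ι ℝ) (x : EuclideanSpace ℝ ι) :
    ⟪toEuclideanCLM (𝕜 := ℝ) (Bᵀ + B) x, x⟫ = 2 * ⟪x, toEuclideanCLM (𝕜 := ℝ) B x⟫ := by
  rw [map_add, _root_.add_apply, inner_add_left, ← conjTranspose_eq_transpose_of_trivial,
    ← star_eq_conjTranspose, map_star, ContinuousLinearMap.star_eq_adjoint,
    ContinuousLinearMap.adjoint_inner_left, real_inner_comm x]
  ring

theorem abs_inner_toEuclideanCLM_le (M : Matrix ι ι ℝ) (x : EuclideanSpace ℝ ι) :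
    |⟪toEuclideanCLM (𝕜 := ℝ) M x, x⟫| ≤ ‖M‖ * ‖x‖ ^ 2 :=
  calc |⟪toEuclideanCLM (𝕜 := ℝ) M x, x⟫| ≤ ‖toEuclideanCLM (𝕜 := ℝ) M x‖ * ‖x‖ :=
        abs_real_inner_le_norm _ _
    _ ≤ ‖M‖ * ‖x‖ * ‖x‖ := by gcongr; exact (toEuclideanCLM (𝕜 := ℝ) M).le_opNorm x
    _ = ‖M‖ * ‖x‖ ^ 2 := by ring

theorem HasDerivWithinAt.toEuclideanCLM_apply {f : ℝ → Matrix ι ι ℝ} {f' : Matrix ι ι ℝ}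
    {s : Set ℝ} {t : ℝ} (hf : HasDerivWithinAt f f' s t) (y : EuclideanSpace ℝ ι) :
    HasDerivWithinAt (fun u => toEuclideanCLM (𝕜 := ℝ) (f u) y)
      (toEuclideanCLM (𝕜 := ℝ) f' y) s t :=
  (LinearMap.toContinuousLinearMap ((LinearMap.applyₗ y).comp
    (toEuclideanLin (𝕜 := ℝ) (m := ι) (n := ι)).toLinearMap)).hasFDerivAt.comp_hasDerivWithinAt t hf

theorem HasDerivWithinAt.norm_sq_of_linear {x : ℝ → EuclideanSpace ℝ ι} {B : Matrix ι ι ℝ}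
    {s : Set ℝ} {t : ℝ} (hx : HasDerivWithinAt x (toEuclideanCLM (𝕜 := ℝ) B (x t)) s t) :
    HasDerivWithinAt (fun u => ‖x u‖ ^ 2) ⟪toEuclideanCLM (𝕜 := ℝ) (Bᵀ + B) (x t), x t⟫ s t := by
  rw [inner_toEuclideanCLM_transpose_add_self]
  exact hx.norm_sq

end QuadraticForm

section LambdaMax

variable {n : ℕ}

theorem lambdaMax_of_isEmpty [IsEmpty (Fin n)] (M : Matrix (Fin n) (Fin n) ℝ) :
    lambdaMax M = 0 := by
  rw [lambdaMax, spectrum.of_subsingleton, Real.sSup_empty]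

theorem le_lambdaMax_of_hasEigenvalue {M : Matrix (Fin n) (Fin n) ℝ} {μ : ℝ}
    (hμ : HasEigenvalue (toEuclideanLin M) μ) : μ ≤ lambdaMax M :=
  le_csSup M.finite_real_spectrum.bddAbove <| by
    rwa [← spectrum_toLpLin 2, ← hasEigenvalue_iff_mem_spectrum]

theorem hasEigenvalue_lambdaMax [Nonempty (Fin n)] {M : Matrix (Fin n) (Fin n) ℝ}
    (hM : M.IsHermitian) : HasEigenvalue (toEuclideanLin M) (lambdaMax M) := by
  rw [hasEigenvalue_iff_mem_spectrum, spectrum_toLpLin]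
  exact Set.Nonempty.csSup_mem ⟨_, hM.eigenvalues_mem_spectrum_real (Classical.arbitrary _)⟩
    M.finite_real_spectrum

theorem inner_toEuclideanCLM_le_lambdaMax {M : Matrix (Fin n) (Fin n) ℝ} (hM : M.IsHermitian)
    (x : EuclideanSpace ℝ (Fin n)) :
    ⟪toEuclideanCLM (𝕜 := ℝ) M x, x⟫ ≤ lambdaMax M * ‖x‖ ^ 2 := by
  rcases eq_or_ne x 0 with rfl | hx
  · simp
  have : Nontrivial (EuclideanSpace ℝ (Fin n)) := ⟨⟨x, 0, hx⟩⟩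
  -- the supremum of the Rayleigh quotient is an eigenvalue, hence at most `lambdaMax M`
  have hT := (isSymmetric_toEuclideanLin_iff.mpr hM).hasEigenvalue_iSup_of_finiteDimensional
  have hbdd : BddAbove (range fun y : {y : EuclideanSpace ℝ (Fin n) // y ≠ 0} =>
      RCLike.re ⟪toEuclideanLin M y, y⟫ / ‖(y : EuclideanSpace ℝ (Fin n))‖ ^ 2) :=
    ⟨‖M‖, by
      rintro _ ⟨y, rfl⟩
      exact (le_abs_self _).trans ((toEuclideanCLM (𝕜 := ℝ) M).rayleighQuotient_le_norm y)⟩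
  have hq := (le_ciSup hbdd ⟨x, hx⟩).trans (le_lambdaMax_of_hasEigenvalue hT)
  rwa [RCLike.re_to_real, div_le_iff₀ (by positivity)] at hq

theorem lambdaMax_le_add_norm_sub {M M' : Matrix (Fin n) (Fin n) ℝ} (hM : M.IsHermitian)
    (hM' : M'.IsHermitian) : lambdaMax M ≤ lambdaMax M' + ‖M - M'‖ := by
  rcases isEmpty_or_nonempty (Fin n) with hn | hn
  · simp [lambdaMax_of_isEmpty]
  obtain ⟨v, hv⟩ := (hasEigenvalue_lambdaMax hM).exists_hasEigenvector
  have hv2 : 0 < ‖v‖ ^ 2 := by have := hv.2; positivity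
  have hMv : ⟪toEuclideanCLM (𝕜 := ℝ) M v, v⟫ = lambdaMax M * ‖v‖ ^ 2 := by
    rw [← real_inner_self_eq_norm_sq, ← real_inner_smul_left, ← hv.apply_eq_smul]
    rfl
  have hsplit : ⟪toEuclideanCLM (𝕜 := ℝ) M v, v⟫ =
      ⟪toEuclideanCLM (𝕜 := ℝ) (M - M') v, v⟫ + ⟪toEuclideanCLM (𝕜 := ℝ) M' v, v⟫ := by
    rw [map_sub, _root_.sub_apply, inner_sub_left]; ring
  have h1 := (le_abs_self _).trans (abs_inner_toEuclideanCLM_le (M - M') v)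
  have h2 := inner_toEuclideanCLM_le_lambdaMax hM' v
  refine le_of_mul_le_mul_right ?_ hv2
  linarith

theorem continuousOn_lambdaMax :
    ContinuousOn lambdaMax {M : Matrix (Fin n) (Fin n) ℝ | M.IsHermitian} :=
  (LipschitzOnWith.of_le_add_mul 1 fun M hM M' hM' => by
    simpa [dist_eq_norm] using lambdaMax_le_add_norm_sub hM hM').continuousOn

end LambdaMax

section LinearODE

variable {n : ℕ} {A : ℝ → Matrix (Fin n) (Fin n) ℝ} {x : ℝ → EuclideanSpace ℝ (Fin n)} {a b : ℝ}

theorem ContinuousOn.transpose_add_self {s : Set ℝ} (hA : ContinuousOn A s) :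
    ContinuousOn (fun t => (A t)ᵀ + A t) s :=
  (continuous_id.matrix_transpose.comp_continuousOn hA).add hA

theorem norm_sq_le_mul_exp_integral_lambdaMax (hab : a ≤ b) (hA : ContinuousOn A (Icc a b))
    (hx : ∀ s ∈ Icc a b, HasDerivWithinAt x (toEuclideanCLM (𝕜 := ℝ) (A s) (x s)) (Icc a b) s) :
    ‖x b‖ ^ 2 ≤ ‖x a‖ ^ 2 * exp (∫ s in a..b, lambdaMax ((A s)ᵀ + A s)) :=
  le_mul_exp_integral_of_deriv_le_mul hab
    (continuousOn_lambdaMax.comp hA.transpose_add_self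
      fun s _ => isHermitian_transpose_add_self_real (A s))
    (fun s hs => (hx s hs).norm_sq_of_linear.continuousWithinAt)
    (fun s hs => (hx s (Ioo_subset_Icc_self hs)).norm_sq_of_linear.hasDerivAt
      (Icc_mem_nhds hs.1 hs.2))
    (fun s _ => inner_toEuclideanCLM_le_lambdaMax (isHermitian_transpose_add_self_real (A s)) (x s))

theorem mul_exp_integral_neg_norm_le_norm_sq (hab : a ≤ b) (hA : ContinuousOn A (Icc a b))
    (hx : ∀ s ∈ Icc a b, HasDerivWithinAt x (toEuclideanCLM (𝕜 := ℝ) (A s) (x s)) (Icc a b) s) :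
    ‖x a‖ ^ 2 * exp (∫ s in a..b, -‖(A s)ᵀ + A s‖) ≤ ‖x b‖ ^ 2 :=
  mul_exp_integral_le_of_mul_le_deriv hab
    (continuous_norm.comp_continuousOn hA.transpose_add_self).neg
    (fun s hs => (hx s hs).norm_sq_of_linear.continuousWithinAt)
    (fun s hs => (hx s (Ioo_subset_Icc_self hs)).norm_sq_of_linear.hasDerivAt
      (Icc_mem_nhds hs.1 hs.2))
    (fun s _ => (neg_mul _ _).trans_le (neg_le_of_abs_le (abs_inner_toEuclideanCLM_le _ (x s))))

end LinearODE

/-- `2 ln‖Φ(t,τ)‖ ≤ ∫_τ^t λ_max[A(s)ᵀ + A(s)] ds` for all `t ≥ τ ≥ t₀`,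
where `Φ` is the transition matrix of `ẋ = A(t)x`. -/
theorem stmt1 {n : ℕ} (t₀ : ℝ) (A : ℝ → Matrix (Fin n) (Fin n) ℝ)
    (hA : ContinuousOn A (Ici t₀))
    (Φ : ℝ → ℝ → Matrix (Fin n) (Fin n) ℝ)
    (hΦ_id : ∀ τ ∈ Ici t₀, Φ τ τ = 1)
    (hΦ_deriv : ∀ τ ∈ Ici t₀, ∀ t ∈ Ici t₀,
      HasDerivWithinAt (fun s => Φ s τ) (A t * Φ t τ) (Ici t₀) t) :
    ∀ τ ∈ Ici t₀, ∀ t ∈ Ici τ,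
      2 * Real.log ‖Φ t τ‖ ≤ ∫ s in τ..t, lambdaMax ((A s)ᵀ + A s) := by
  intro τ hτ t ht
  rcases isEmpty_or_nonempty (Fin n) with hn | hn
  · simp [Subsingleton.elim (Φ t τ) 0, lambdaMax_of_isEmpty]
  have hIcc : Icc τ t ⊆ Ici t₀ := fun s hs => le_trans hτ hs.1
  have hsol (y : EuclideanSpace ℝ (Fin n)) : ∀ s ∈ Icc τ t, HasDerivWithinAt
      (fun r => toEuclideanCLM (𝕜 := ℝ) (Φ r τ) y)
      (toEuclideanCLM (𝕜 := ℝ) (A s) (toEuclideanCLM (𝕜 := ℝ) (Φ s τ) y)) (Icc τ t) s := by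
    intro s hs
    simpa only [map_mul, mul_apply_eq_comp] using
      ((hΦ_deriv τ hτ s (hIcc hs)).toEuclideanCLM_apply y).mono hIcc
  have hinit (y : EuclideanSpace ℝ (Fin n)) : toEuclideanCLM (𝕜 := ℝ) (Φ τ τ) y = y := by
    simp [hΦ_id τ hτ]
  have hAc := hA.mono hIcc
  obtain ⟨y, hy⟩ := exists_ne (0 : EuclideanSpace ℝ (Fin n))
  have hΦy : 0 < ‖toEuclideanCLM (𝕜 := ℝ) (Φ t τ) y‖ ^ 2 :=
    (mul_pos (pow_pos (norm_pos_iff.mpr hy) 2) (exp_pos _)).trans_le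
      (by simpa only [hinit] using mul_exp_integral_neg_norm_le_norm_sq ht hAc (hsol y))
  have hΦ_ne : Φ t τ ≠ 0 := fun h => by simp [h] at hΦy
  have hsq : ‖toEuclideanCLM (𝕜 := ℝ) (Φ t τ)‖ ^ 2 ≤ exp (∫ s in τ..t, lambdaMax ((A s)ᵀ + A s)) :=
    ContinuousLinearMap.opNorm_sq_le_of_norm_sq_le (exp_pos _).le fun y => by
      simpa only [hinit, mul_comm] using norm_sq_le_mul_exp_integral_lambdaMax ht hAc (hsol y)
  have hlog := log_le_log (pow_pos (norm_pos_iff.mpr hΦ_ne) 2) hsq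
  rwa [log_pow, log_exp, Nat.cast_ofNat] at hlog
end

section
/- Suppose there exist finite positive constants γ̃ and λ̃ such that ∫_τ^t λ_max[A(s)ᵀ + A(s)] ds ≤ γ̃ − λ̃·(t − τ) for all t ≥ τ ≥ t₀. Then ‖Φ(t,τ)‖_I ≤ e^{γ̃/2} · e^{−(λ̃/2)(t−τ)} for all t ≥ τ ≥ t₀; in particular the system is uniformly asymptotically stable with constants γ = e^{γ̃/2} and λ = λ̃/2. -/
open scoped Matrix
open scoped Matrix.Norms.L2Operator  -- `‖·‖` on matrices is the operator norm induced by the Euclidean norm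
open Set

/-!
Along a solution of `y' = A y` one has `(‖y‖²)' = ⟪y, (Aᵀ + A) y⟫ ≤ λ_max[Aᵀ + A] ‖y‖²`, so
Grönwall's inequality gives `‖y t‖ ≤ exp (½ ∫_τ^t λ_max[Aᵀ + A]) ‖y τ‖`, and the hypothesis
bounds the exponent by `(γ̃ - λ̃ (t - τ)) / 2`. The fundamental theorem of calculus needs
`λ_max[Aᵀ + A]` to be continuous in time; this follows from Weyl's inequality
`λ_max M ≤ λ_max N + ‖M - N‖`.
-/

open Matrix Real
open scoped MatrixOrder RealInnerProductSpace

theorem le_mul_exp_integral_of_hasDerivAt_le {f f' μ : ℝ → ℝ} {a b : ℝ} (hab : a ≤ b)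
    (hμ : ContinuousOn μ (Icc a b)) (hf : ContinuousOn f (Icc a b))
    (hf' : ∀ s ∈ Ioo a b, HasDerivAt f (f' s) s) (hle : ∀ s ∈ Ioo a b, f' s ≤ μ s * f s) :
    f b ≤ f a * exp (∫ s in a..b, μ s) := by
  set c : ℝ → ℝ := fun u => ∫ s in a..u, μ s
  have hc_cont : ContinuousOn c (Icc a b) := by
    rw [← uIcc_of_le hab] at hμ ⊢
    exact intervalIntegral.continuousOn_primitive_interval hμ.integrableOn_uIcc
  have hc_deriv : ∀ s ∈ Ioo a b, HasDerivAt c (μ s) s := fun s hs =>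
    intervalIntegral.integral_hasDerivAt_right
      ((hμ.mono (Icc_subset_Icc_right hs.2.le)).intervalIntegrable_of_Icc hs.1.le)
      ((hμ.mono Ioo_subset_Icc_self).stronglyMeasurableAtFilter isOpen_Ioo s hs)
      (hμ.continuousAt (Icc_mem_nhds hs.1 hs.2))
  set g : ℝ → ℝ := fun u => f u * exp (-c u)
  have hg_deriv : ∀ s ∈ Ioo a b, HasDerivAt g ((f' s - μ s * f s) * exp (-c s)) s := fun s hs =>
    ((hf' s hs).mul (hc_deriv s hs).neg.exp).congr_deriv (by simp only [Pi.neg_apply]; ring)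
  have hg_anti : AntitoneOn g (Icc a b) := by
    refine antitoneOn_of_deriv_nonpos (convex_Icc a b) (hf.mul hc_cont.neg.rexp) ?_ ?_ <;>
      rw [interior_Icc]
    · exact fun s hs => (hg_deriv s hs).differentiableAt.differentiableWithinAt
    · intro s hs
      rw [(hg_deriv s hs).deriv]
      exact mul_nonpos_of_nonpos_of_nonneg (sub_nonpos.2 (hle s hs)) (exp_pos _).le
  have hga : g a = f a := by simp [g, c]
  calc f b = g b * exp (c b) := by
        simp only [g, mul_assoc, ← exp_add, neg_add_cancel, exp_zero, mul_one]
    _ ≤ f a * exp (c b) := by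
      gcongr
      exact hga ▸ hg_anti (left_mem_Icc.2 hab) (right_mem_Icc.2 hab) hab

namespace Matrix

variable {n : ℕ} {M N : Matrix (Fin n) (Fin n) ℝ}

theorem inner_toEuclideanLin (x : EuclideanSpace ℝ (Fin n)) :
    ⟪x, toEuclideanLin M x⟫ = WithLp.ofLp x ⬝ᵥ M *ᵥ WithLp.ofLp x :=
  inner_toEuclideanCLM M x x

theorem le_smul_one_iff (hM : M.IsHermitian) (r : ℝ) :
    M ≤ r • 1 ↔ ∀ x : EuclideanSpace ℝ (Fin n), ⟪x, toEuclideanLin M x⟫ ≤ r * ‖x‖ ^ 2 := by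
  have hr : (r • 1 - M).IsHermitian := (isHermitian_one.smul (IsSelfAdjoint.all r)).sub hM
  rw [le_iff, posSemidef_iff_dotProduct_mulVec, (WithLp.toLp_surjective 2).forall]
  simp only [hr, true_and, inner_toEuclideanLin, EuclideanSpace.real_norm_sq_eq, star_trivial,
    sub_mulVec, smul_mulVec, one_mulVec, dotProduct_sub, dotProduct_smul, smul_eq_mul, sub_nonneg]
  simp only [dotProduct, sq]

theorem le_lambdaMax_smul_one (hM : M.IsHermitian) : M ≤ lambdaMax M • 1 := by
  rw [← Algebra.algebraMap_eq_smul_one]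
  exact le_algebraMap_of_spectrum_le fun x hx => le_csSup finite_real_spectrum.bddAbove hx

theorem lambdaMax_le_of_le_smul_one [NeZero n] (hM : M.IsHermitian) {r : ℝ} (h : M ≤ r • 1) :
    lambdaMax M ≤ r := by
  rw [← Algebra.algebraMap_eq_smul_one, le_algebraMap_iff_spectrum_le] at h
  exact csSup_le (ContinuousFunctionalCalculus.spectrum_nonempty M hM) h

theorem inner_le_lambdaMax_mul_norm_sq (hM : M.IsHermitian) (x : EuclideanSpace ℝ (Fin n)) :
    ⟪x, toEuclideanLin M x⟫ ≤ lambdaMax M * ‖x‖ ^ 2 :=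
  (le_smul_one_iff hM _).1 (le_lambdaMax_smul_one hM) x

theorem le_norm_smul_one (hM : M.IsHermitian) : M ≤ ‖M‖ • 1 := by
  refine (le_smul_one_iff hM _).2 fun x => ?_
  calc ⟪x, toEuclideanLin M x⟫ ≤ ‖x‖ * ‖toEuclideanLin M x‖ := real_inner_le_norm _ _
    _ ≤ ‖x‖ * (‖M‖ * ‖x‖) := by
      gcongr
      exact (toEuclideanCLM (n := Fin n) (𝕜 := ℝ) M).le_opNorm x
    _ = ‖M‖ * ‖x‖ ^ 2 := by ring

theorem lambdaMax_le_lambdaMax_add_norm_sub (hM : M.IsHermitian) (hN : N.IsHermitian) :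
    lambdaMax M ≤ lambdaMax N + ‖M - N‖ := by
  rcases Nat.eq_zero_or_pos n with rfl | hn
  · rw [Subsingleton.elim M N, sub_self, norm_zero, add_zero]
  have : NeZero n := NeZero.of_pos hn
  refine lambdaMax_le_of_le_smul_one hM ?_
  calc M = N + (M - N) := (add_sub_cancel N M).symm
    _ ≤ lambdaMax N • 1 + ‖M - N‖ • 1 :=
      add_le_add (le_lambdaMax_smul_one hN) (le_norm_smul_one (hM.sub hN))
    _ = (lambdaMax N + ‖M - N‖) • 1 := (add_smul _ _ _).symm

theorem lipschitzWith_lambdaMax_transpose_add :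
    LipschitzWith 2 fun X : Matrix (Fin n) (Fin n) ℝ => lambdaMax (Xᵀ + X) := by
  refine LipschitzWith.of_le_add_mul 2 fun X Y => ?_
  have hnorm : ‖(X - Y)ᵀ‖ = ‖X - Y‖ := by
    rw [← conjTranspose_eq_transpose_of_trivial]
    exact l2_opNorm_conjTranspose _
  calc lambdaMax (Xᵀ + X) ≤ lambdaMax (Yᵀ + Y) + ‖(Xᵀ + X) - (Yᵀ + Y)‖ :=
        lambdaMax_le_lambdaMax_add_norm_sub (isHermitian_transpose_add_self X)
          (isHermitian_transpose_add_self Y)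
    _ = lambdaMax (Yᵀ + Y) + ‖(X - Y)ᵀ + (X - Y)‖ := by
        rw [transpose_sub, add_sub_add_comm]
    _ ≤ lambdaMax (Yᵀ + Y) + 2 * dist X Y := by
        have := norm_add_le (X - Y)ᵀ (X - Y)
        rw [hnorm] at this
        rw [dist_eq_norm]
        linarith

theorem inner_toEuclideanLin_transpose_add_self (A : Matrix (Fin n) (Fin n) ℝ)
    (x : EuclideanSpace ℝ (Fin n)) :
    ⟪x, toEuclideanLin (Aᵀ + A) x⟫ = 2 * ⟪x, toEuclideanLin A x⟫ := by
  simp only [inner_toEuclideanLin, add_mulVec, dotProduct_add, dotProduct_mulVec _ Aᵀ,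
    vecMul_transpose, dotProduct_comm (A *ᵥ _)]
  ring

end Matrix

theorem HasDerivWithinAt.toEuclideanLin_apply {n : ℕ} {X : ℝ → Matrix (Fin n) (Fin n) ℝ}
    {X' : Matrix (Fin n) (Fin n) ℝ} {s : Set ℝ} {t : ℝ} (hX : HasDerivWithinAt X X' s t)
    (x : EuclideanSpace ℝ (Fin n)) :
    HasDerivWithinAt (fun u => toEuclideanLin (X u) x) (toEuclideanLin X' x) s t :=
  let L := (LinearMap.applyₗ x).comp (toEuclideanLin (𝕜 := ℝ) (m := Fin n) (n := Fin n)).toLinearMap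
  L.toContinuousLinearMap.hasFDerivAt.comp_hasDerivWithinAt t hX

theorem norm_le_exp_half_integral_lambdaMax_mul_norm {n : ℕ} {A : ℝ → Matrix (Fin n) (Fin n) ℝ}
    {y : ℝ → EuclideanSpace ℝ (Fin n)} {a b : ℝ} (hab : a ≤ b) (hA : ContinuousOn A (Icc a b))
    (hy : ∀ s ∈ Icc a b, HasDerivWithinAt y (toEuclideanLin (A s) (y s)) (Icc a b) s) :
    ‖y b‖ ≤ exp ((∫ s in a..b, lambdaMax ((A s)ᵀ + A s)) / 2) * ‖y a‖ := by
  set I := ∫ s in a..b, lambdaMax ((A s)ᵀ + A s)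
  have hsq : ‖y b‖ ^ 2 ≤ ‖y a‖ ^ 2 * exp I := by
    refine le_mul_exp_integral_of_hasDerivAt_le hab
      (lipschitzWith_lambdaMax_transpose_add.continuous.comp_continuousOn hA)
      (fun s hs => (hy s hs).continuousWithinAt.norm.pow 2)
      (fun s hs => ((hy s (Ioo_subset_Icc_self hs)).hasDerivAt (Icc_mem_nhds hs.1 hs.2)).norm_sq)
      fun s _ => ?_
    rw [← inner_toEuclideanLin_transpose_add_self]
    exact inner_le_lambdaMax_mul_norm_sq (isHermitian_transpose_add_self (A s)) (y s)
  have hexp : exp I = exp (I / 2) ^ 2 := by rw [← exp_nat_mul]; ring_nf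
  rw [hexp, ← mul_pow, mul_comm] at hsq
  exact (pow_le_pow_iff_left₀ (norm_nonneg _) (by positivity) two_ne_zero).1 hsq

theorem stmt2_general {n : ℕ} (t₀ : ℝ) (A : ℝ → Matrix (Fin n) (Fin n) ℝ)
    (hA : ContinuousOn A (Ici t₀))
    (Φ : ℝ → ℝ → Matrix (Fin n) (Fin n) ℝ)
    (hΦ_id : ∀ τ ∈ Ici t₀, Φ τ τ = 1)
    (hΦ_deriv : ∀ τ ∈ Ici t₀, ∀ t ∈ Ici t₀,
      HasDerivWithinAt (fun s => Φ s τ) (A t * Φ t τ) (Ici t₀) t)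
    (γ' lam : ℝ)
    (hbound : ∀ τ ∈ Ici t₀, ∀ t ∈ Ici τ,
      (∫ s in τ..t, lambdaMax ((A s)ᵀ + A s)) ≤ γ' - lam * (t - τ)) :
    ∀ τ ∈ Ici t₀, ∀ t ∈ Ici τ,
      ‖Φ t τ‖ ≤ Real.exp (γ' / 2) * Real.exp (-(lam / 2) * (t - τ)) := by
  intro τ hτ t ht
  have hsub : Icc τ t ⊆ Ici t₀ := fun s hs => le_trans hτ hs.1
  have hsol (x : EuclideanSpace ℝ (Fin n)) :
      ‖toEuclideanLin (Φ t τ) x‖ ≤ exp ((∫ s in τ..t, lambdaMax ((A s)ᵀ + A s)) / 2) * ‖x‖ := by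
    have h := norm_le_exp_half_integral_lambdaMax_mul_norm (y := fun s => toEuclideanLin (Φ s τ) x)
      (mem_Ici.1 ht) (hA.mono hsub) fun s hs => ?_
    · simpa only [hΦ_id τ hτ, toLpLin_one, LinearMap.id_apply] using h
    simpa only [toLpLin_mul_same, LinearMap.comp_apply] using
      ((hΦ_deriv τ hτ s (hsub hs)).mono hsub).toEuclideanLin_apply x
  have hexp : exp ((∫ s in τ..t, lambdaMax ((A s)ᵀ + A s)) / 2)
      ≤ exp (γ' / 2) * exp (-(lam / 2) * (t - τ)) := by
    rw [← exp_add]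
    exact exp_le_exp.2 (by linarith [hbound τ hτ t ht])
  rw [← l2_opNorm_toEuclideanCLM]
  refine ContinuousLinearMap.opNorm_le_bound _ (by positivity) fun x => ?_
  exact (hsol x).trans (by gcongr)

/-- if `∫_τ^t λ_max[A(s)ᵀ+A(s)] ds ≤ γ̃ − λ̃(t−τ)` for all `t ≥ τ ≥ t₀` with
`γ̃, λ̃ > 0`, then `‖Φ(t,τ)‖ ≤ e^{γ̃/2} e^{−(λ̃/2)(t−τ)}` for all `t ≥ τ ≥ t₀`; i.e. the system
is uniformly asymptotically stable with `γ = e^{γ̃/2}` and `λ = λ̃/2`. -/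
theorem stmt2 {n : ℕ} (t₀ : ℝ) (A : ℝ → Matrix (Fin n) (Fin n) ℝ)
    (hA : ContinuousOn A (Ici t₀))
    (Φ : ℝ → ℝ → Matrix (Fin n) (Fin n) ℝ)
    (hΦ_id : ∀ τ ∈ Ici t₀, Φ τ τ = 1)
    (hΦ_deriv : ∀ τ ∈ Ici t₀, ∀ t ∈ Ici t₀,
      HasDerivWithinAt (fun s => Φ s τ) (A t * Φ t τ) (Ici t₀) t)
    (γ' lam : ℝ) (hγ' : 0 < γ') (hlam : 0 < lam)
    (hbound : ∀ τ ∈ Ici t₀, ∀ t ∈ Ici τ,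
      (∫ s in τ..t, lambdaMax ((A s)ᵀ + A s)) ≤ γ' - lam * (t - τ)) :
    ∀ τ ∈ Ici t₀, ∀ t ∈ Ici τ,
      ‖Φ t τ‖ ≤ Real.exp (γ' / 2) * Real.exp (-(lam / 2) * (t - τ)) :=
  stmt2_general t₀ A hA Φ hΦ_id hΦ_deriv γ' lam hbound
end

section
/- Suppose the system ẋ = A(t)x is uniformly asymptotically stable, i.e. ‖Φ(t,τ)‖_I ≤ γ·e^{−λ(t−τ)} for all t ≥ τ ≥ t₀ with constants γ, λ > 0. Then for every t ≥ t₀ the improper integral H(t) = ∫_t^∞ Φ(τ,t)ᵀ·Φ(τ,t) dτ converges, and the matrix H(t) is symmetric and positive definite: H(t)ᵀ = H(t) and xᵀ·H(t)·x > 0 for every nonzero x ∈ ℝⁿ. -/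
open scoped Matrix Matrix.Norms.L2Operator
open Set MeasureTheory

/-! Since `‖Mᵀ M‖ = ‖M‖²` for the spectral norm, the integrand is bounded by
`γ² e^{-2λ(τ-t)}`, so `H(t)` converges. Transposition and the quadratic form `M ↦ xᵀ M x`
are continuous linear, hence commute with the integral: `H(t)` is symmetric and
`xᵀ H(t) x = ∫ |Φ(τ,t) x|² dτ`. This integrand is continuous and equals `|x|² > 0` at `τ = t`,
so it is positive on a right neighbourhood of `t`. -/

namespace Matrix

variable {m n : Type*} [Fintype m] [Fintype n]

lemma l2_opNorm_transpose_mul_self [DecidableEq n] (M : Matrix m n ℝ) :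
    ‖Mᵀ * M‖ = ‖M‖ * ‖M‖ := by
  rw [← conjTranspose_eq_transpose_of_trivial, l2_opNorm_conjTranspose_mul_self]

lemma dotProduct_transpose_mul_self_mulVec (M : Matrix m n ℝ) (x : n → ℝ) :
    x ⬝ᵥ ((Mᵀ * M) *ᵥ x) = (M *ᵥ x) ⬝ᵥ (M *ᵥ x) := by
  rw [← mulVec_mulVec, dotProduct_mulVec, vecMul_transpose]

variable [DecidableEq n] {X : Type*} [MeasurableSpace X] {μ : Measure X}

noncomputable def dotProductMulVecCLM (x : m → ℝ) (y : n → ℝ) : Matrix m n ℝ →L[ℝ] ℝ :=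
  LinearMap.toContinuousLinearMap
    { toFun := fun M => x ⬝ᵥ (M *ᵥ y)
      map_add' := fun M N => by simp only [add_mulVec, dotProduct_add]
      map_smul' := fun c M => by simp only [smul_mulVec, dotProduct_smul, RingHom.id_apply] }

lemma transpose_integral [DecidableEq m] (f : X → Matrix m n ℝ) :
    (∫ a, f a ∂μ)ᵀ = ∫ a, (f a)ᵀ ∂μ :=
  ((transposeLinearEquiv m n ℝ ℝ).toContinuousLinearEquiv.integral_comp_comm f).symm

lemma dotProduct_integral_mulVec {f : X → Matrix m n ℝ} (hf : Integrable f μ)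
    (x : m → ℝ) (y : n → ℝ) :
    x ⬝ᵥ ((∫ a, f a ∂μ) *ᵥ y) = ∫ a, x ⬝ᵥ (f a *ᵥ y) ∂μ :=
  ((dotProductMulVecCLM x y).integral_comp_comm hf).symm

end Matrix

lemma integrableOn_Ioi_of_norm_le_mul_exp {E : Type*} [NormedAddCommGroup E] {f : ℝ → E}
    {t C b : ℝ} (hb : 0 < b) (hf : ContinuousOn f (Ioi t))
    (hle : ∀ s ∈ Ioi t, ‖f s‖ ≤ C * Real.exp (-b * (s - t))) : IntegrableOn f (Ioi t) := by
  have hexp : ∀ s, C * Real.exp (-b * (s - t)) = C * Real.exp (b * t) * Real.exp (-b * s) :=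
    fun s => by rw [mul_assoc, ← Real.exp_add]; ring_nf
  refine Integrable.mono' ((exp_neg_integrableOn_Ioi t hb).const_mul (C * Real.exp (b * t)))
    (hf.aestronglyMeasurable measurableSet_Ioi) ?_
  filter_upwards [ae_restrict_mem measurableSet_Ioi] with s hs
  exact (hle s hs).trans_eq (hexp s)

lemma setIntegral_Ioi_pos_of_continuousWithinAt {g : ℝ → ℝ} {t : ℝ}
    (hg : IntegrableOn g (Ioi t)) (hg_nonneg : ∀ s ∈ Ioi t, 0 ≤ g s)
    (hg_cont : ContinuousWithinAt g (Ici t) t) (hg_pos : 0 < g t) :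
    0 < ∫ s in Ioi t, g s := by
  rw [setIntegral_pos_iff_support_of_nonneg_ae (ae_restrict_of_forall_mem measurableSet_Ioi hg_nonneg) hg]
  have hev : ∀ᶠ s in nhdsWithin t (Ioi t), 0 < g s :=
    ((hg_cont.mono Ioi_subset_Ici_self).eventually (eventually_gt_nhds hg_pos))
  obtain ⟨u, htu, hpos⟩ := mem_nhdsGT_iff_exists_Ioo_subset.mp hev
  calc (0 : ENNReal) < volume (Ioo t u) := by
        rw [Real.volume_Ioo]; exact ENNReal.ofReal_pos.mpr (sub_pos.mpr htu)
    _ ≤ volume (Function.support g ∩ Ioi t) :=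
        measure_mono fun s hs => ⟨(hpos hs).ne', hs.1⟩

section Gramian

variable {ι : Type*} [Fintype ι] [DecidableEq ι] {M : ℝ → Matrix ι ι ℝ} {t γ lam : ℝ}

lemma integrableOn_transpose_mul_self_of_norm_le_exp (hlam : 0 < lam)
    (hM : ContinuousOn M (Ioi t))
    (hdecay : ∀ s ∈ Ioi t, ‖M s‖ ≤ γ * Real.exp (-lam * (s - t))) :
    IntegrableOn (fun s => (M s)ᵀ * M s) (Ioi t) := by
  have hMT : ContinuousOn (fun s => (M s)ᵀ) (Ioi t) :=
    continuous_id.matrix_transpose.comp_continuousOn hM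
  refine integrableOn_Ioi_of_norm_le_mul_exp (C := γ ^ 2) (b := 2 * lam) (by positivity)
    (hMT.mul hM) fun s hs => ?_
  calc ‖(M s)ᵀ * M s‖ = ‖M s‖ * ‖M s‖ := Matrix.l2_opNorm_transpose_mul_self _
    _ ≤ (γ * Real.exp (-lam * (s - t))) * (γ * Real.exp (-lam * (s - t))) :=
        mul_self_le_mul_self (norm_nonneg _) (hdecay s hs)
    _ = γ ^ 2 * Real.exp (-(2 * lam) * (s - t)) := by
        rw [mul_mul_mul_comm, ← Real.exp_add]; ring_nf

lemma dotProduct_integral_transpose_mul_self_mulVec_pos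
    (hint : IntegrableOn (fun s => (M s)ᵀ * M s) (Ioi t))
    (hM : ContinuousWithinAt M (Ici t) t) (hMt : M t = 1) {x : ι → ℝ} (hx : x ≠ 0) :
    0 < x ⬝ᵥ ((∫ s in Ioi t, (M s)ᵀ * M s) *ᵥ x) := by
  have hsq : ∀ s, x ⬝ᵥ (((M s)ᵀ * M s) *ᵥ x) = (M s *ᵥ x) ⬝ᵥ (M s *ᵥ x) := fun s =>
    Matrix.dotProduct_transpose_mul_self_mulVec _ _
  have hMT : ContinuousWithinAt (fun s => (M s)ᵀ) (Ici t) t :=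
    continuous_id.matrix_transpose.continuousAt.comp_continuousWithinAt hM
  rw [Matrix.dotProduct_integral_mulVec hint]
  refine setIntegral_Ioi_pos_of_continuousWithinAt
    ((Matrix.dotProductMulVecCLM x x).integrable_comp hint) (fun s _ => ?_)
    ((Matrix.dotProductMulVecCLM x x).continuous.continuousAt.comp_continuousWithinAt
      (hMT.mul hM)) ?_
  · simpa [hsq] using dotProduct_self_star_nonneg (M s *ᵥ x)
  · simpa [hsq, hMt] using Matrix.dotProduct_self_star_pos_iff.mpr hx

end Gramian

theorem stmt3_general {n : ℕ} (t₀ : ℝ) (A : ℝ → Matrix (Fin n) (Fin n) ℝ)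
    (Φ : ℝ → ℝ → Matrix (Fin n) (Fin n) ℝ)
    (hΦ_id : ∀ τ ∈ Ici t₀, Φ τ τ = 1)
    (hΦ_deriv : ∀ τ ∈ Ici t₀, ∀ t ∈ Ici t₀,
      HasDerivWithinAt (fun s => Φ s τ) (A t * Φ t τ) (Ici t₀) t)
    (γ lam : ℝ) (hlam : 0 < lam)
    (hUAS : ∀ τ ∈ Ici t₀, ∀ t ∈ Ici τ, ‖Φ t τ‖ ≤ γ * Real.exp (-lam * (t - τ))) :
    ∀ t ∈ Ici t₀,
      IntegrableOn (fun τ => (Φ τ t)ᵀ * Φ τ t) (Ioi t) ∧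
      (∫ τ in Ioi t, (Φ τ t)ᵀ * Φ τ t)ᵀ = ∫ τ in Ioi t, (Φ τ t)ᵀ * Φ τ t ∧
      ∀ x : Fin n → ℝ, x ≠ 0 → 0 < x ⬝ᵥ ((∫ τ in Ioi t, (Φ τ t)ᵀ * Φ τ t) *ᵥ x) := by
  intro t ht
  have hsub : Ici t ⊆ Ici t₀ := Ici_subset_Ici.mpr ht
  have hcont : ContinuousOn (fun τ => Φ τ t) (Ici t) := fun s hs =>
    (hΦ_deriv t ht s (hsub hs)).continuousWithinAt.mono hsub
  have hint : IntegrableOn (fun τ => (Φ τ t)ᵀ * Φ τ t) (Ioi t) :=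
    integrableOn_transpose_mul_self_of_norm_le_exp hlam (hcont.mono Ioi_subset_Ici_self)
      fun s hs => hUAS t ht s (mem_Ici.mpr hs.le)
  refine ⟨hint, ?_, fun x hx => dotProduct_integral_transpose_mul_self_mulVec_pos hint
    (hcont t self_mem_Ici) (hΦ_id t ht) hx⟩
  simp_rw [Matrix.transpose_integral, Matrix.transpose_mul, Matrix.transpose_transpose]

/-- for a uniformly asymptotically stable system `ẋ = A(t)x`, the improper
integral `H(t) = ∫_t^∞ Φ(τ,t)ᵀ Φ(τ,t) dτ` converges for every `t ≥ t₀`, and `H(t)` is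
symmetric and positive definite. -/
theorem stmt3 {n : ℕ} (t₀ : ℝ) (A : ℝ → Matrix (Fin n) (Fin n) ℝ)
    (hA : ContinuousOn A (Ici t₀))
    (Φ : ℝ → ℝ → Matrix (Fin n) (Fin n) ℝ)
    (hΦ_id : ∀ τ ∈ Ici t₀, Φ τ τ = 1)
    (hΦ_deriv : ∀ τ ∈ Ici t₀, ∀ t ∈ Ici t₀,
      HasDerivWithinAt (fun s => Φ s τ) (A t * Φ t τ) (Ici t₀) t)
    (γ lam : ℝ) (hγ : 0 < γ) (hlam : 0 < lam)
    (hUAS : ∀ τ ∈ Ici t₀, ∀ t ∈ Ici τ, ‖Φ t τ‖ ≤ γ * Real.exp (-lam * (t - τ))) :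
    ∀ t ∈ Ici t₀,
      IntegrableOn (fun τ => (Φ τ t)ᵀ * Φ τ t) (Ioi t) ∧
      (∫ τ in Ioi t, (Φ τ t)ᵀ * Φ τ t)ᵀ = ∫ τ in Ioi t, (Φ τ t)ᵀ * Φ τ t ∧
      ∀ x : Fin n → ℝ, x ≠ 0 → 0 < x ⬝ᵥ ((∫ τ in Ioi t, (Φ τ t)ᵀ * Φ τ t) *ᵥ x) :=
  stmt3_general t₀ A Φ hΦ_id hΦ_deriv γ lam hlam hUAS
end

section
/- Suppose the system ẋ = A(t)x is uniformly asymptotically stable. Then the matrix function H(t) = ∫_t^∞ Φ(τ,t)ᵀ·Φ(τ,t) dτ is differentiable on [t₀,∞) and satisfies the Lyapunov differential equation Ḣ(t) + A(t)ᵀ·H(t) + H(t)·A(t) = −I for all t ≥ t₀. -/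
/-! Put `Ψ(τ) = Φ(τ,t₀)`. Uniqueness for `ẋ = A(t)x` gives the cocycle identity
`Φ(τ,u) = Ψ(τ)Ψ(u)⁻¹`, so `H(u) = Ψ(u)⁻ᵀ G(u) Ψ(u)⁻¹` with `G(u) = ∫_u^∞ Ψᵀ Ψ`. Uniform
exponential decay makes `G` converge and `Ġ(u) = -Ψ(u)ᵀΨ(u)`, while `(Ψ⁻¹)˙ = -Ψ⁻¹A`. The product
rule then gives `Ḣ = -AᵀH - I - HA`, the `-I` being `Ψ⁻ᵀ Ġ Ψ⁻¹`. -/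

open scoped Matrix
open scoped Matrix.Norms.L2Operator  -- `‖·‖` on matrices is the operator norm induced by the Euclidean norm
open Set MeasureTheory

/-- `H(t) = ∫_t^∞ Φ(τ,t)ᵀ Φ(τ,t) dτ`. -/
noncomputable def Hmat {n : ℕ} (Φ : ℝ → ℝ → Matrix (Fin n) (Fin n) ℝ) (t : ℝ) :
    Matrix (Fin n) (Fin n) ℝ :=
  ∫ τ in Ioi t, (Φ τ t)ᵀ * Φ τ t

theorem eq_of_hasDerivWithinAt_mul_left {R : Type*} [NormedRing R] [NormedAlgebra ℝ R]
    {A f g : ℝ → R} {a b : ℝ} (hA : ContinuousOn A (Icc a b))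
    (hf : ∀ r ∈ Icc a b, HasDerivWithinAt f (A r * f r) (Ici a) r)
    (hg : ∀ r ∈ Icc a b, HasDerivWithinAt g (A r * g r) (Ici a) r)
    (hab : a ≤ b) (ha : f a = g a) : f b = g b := by
  obtain ⟨C, hC⟩ := isCompact_Icc.exists_bound_of_continuousOn hA
  have hlip : ∀ r ∈ Ico a b, LipschitzOnWith C.toNNReal (A r * ·) univ := fun r hr =>
    LipschitzWith.lipschitzOnWith <| LipschitzWith.of_dist_le_mul fun x y => by
      rw [dist_eq_norm, dist_eq_norm, ← mul_sub]
      exact (norm_mul_le _ _).trans <| mul_le_mul_of_nonneg_right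
        ((hC r (Ico_subset_Icc_self hr)).trans (Real.le_coe_toNNReal C)) (norm_nonneg _)
  have hcont {h : ℝ → R} (hh : ∀ r ∈ Icc a b, HasDerivWithinAt h (A r * h r) (Ici a) r) :
      ContinuousOn h (Icc a b) := fun r hr =>
    (hh r hr).continuousWithinAt.mono Icc_subset_Ici_self
  have hright {h : ℝ → R} (hh : ∀ r ∈ Icc a b, HasDerivWithinAt h (A r * h r) (Ici a) r) :
      ∀ r ∈ Ico a b, HasDerivWithinAt h (A r * h r) (Ici r) r := fun r hr =>
    (hh r (Ico_subset_Icc_self hr)).mono (Ici_subset_Ici.mpr hr.1)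
  exact ODE_solution_unique_of_mem_Icc_right hlip (hcont hf) (hright hf) (fun _ _ => mem_univ _)
    (hcont hg) (hright hg) (fun _ _ => mem_univ _) ha ⟨hab, le_rfl⟩

theorem HasDerivWithinAt.inverse_of_mul_eq_one {R : Type*} [NormedRing R]
    [HasSummableGeomSeries R] [NormedAlgebra ℝ R] {f g : ℝ → R} {f' : R} {s : Set ℝ} {t : ℝ}
    (hf : HasDerivWithinAt f f' s t) (hfg : ∀ x ∈ s, f x * g x = 1)
    (hgf : ∀ x ∈ s, g x * f x = 1) (ht : t ∈ s) :
    HasDerivWithinAt g (-(g t * f' * g t)) s t := by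
  have hinv : ∀ x ∈ s, Ring.inverse (f x) = g x := fun x hx =>
    Ring.inverse_unit ⟨f x, g x, hfg x hx, hgf x hx⟩
  have := (hasFDerivAt_ringInverse (𝕜 := ℝ) ⟨f t, g t, hfg t ht, hgf t ht⟩).comp_hasDerivWithinAt t hf
  exact this.congr (fun x hx => (hinv x hx).symm) (hinv t ht).symm

theorem HasDerivWithinAt.matrix_transpose {m n : Type*} [Fintype m] [Fintype n] [DecidableEq m] [DecidableEq n]
    {f : ℝ → Matrix m n ℝ} {f' : Matrix m n ℝ} {s : Set ℝ} {t : ℝ}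
    (hf : HasDerivWithinAt f f' s t) : HasDerivWithinAt (fun x => (f x)ᵀ) f'ᵀ s t :=
  (Matrix.transposeLinearEquiv m n ℝ ℝ).toLinearMap.toContinuousLinearMap.hasFDerivAt
    |>.comp_hasDerivWithinAt t hf

theorem integrableOn_Ioi_of_norm_le_exp {E : Type*} [NormedAddCommGroup E] {f : ℝ → E}
    {a b C : ℝ} (hb : 0 < b) (hf : ContinuousOn f (Ici a))
    (hle : ∀ x ∈ Ici a, ‖f x‖ ≤ C * Real.exp (-b * (x - a))) : IntegrableOn f (Ioi a) := by
  have hexp : IntegrableOn (fun x => C * Real.exp (-b * (x - a))) (Ioi a) := by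
    have := (exp_neg_integrableOn_Ioi a hb).const_mul (C * Real.exp (b * a))
    refine IntegrableOn.congr_fun this (fun x _ => ?_) measurableSet_Ioi
    rw [mul_assoc, ← Real.exp_add]
    ring_nf
  refine hexp.mono' ((hf.mono Ioi_subset_Ici_self).aestronglyMeasurable measurableSet_Ioi) ?_
  filter_upwards [ae_restrict_mem measurableSet_Ioi] with x hx
  exact hle x (Ioi_subset_Ici_self hx)

theorem integrableOn_transpose_mul_self_of_norm_le_exp_s8 {m : Type*} [Fintype m] [DecidableEq m]
    {Ψ : ℝ → Matrix m m ℝ} {a γ lam : ℝ} (hlam : 0 < lam) (hΨ : ContinuousOn Ψ (Ici a))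
    (hle : ∀ x ∈ Ici a, ‖Ψ x‖ ≤ γ * Real.exp (-lam * (x - a))) :
    IntegrableOn (fun x => (Ψ x)ᵀ * Ψ x) (Ioi a) := by
  refine integrableOn_Ioi_of_norm_le_exp (b := 2 * lam) (C := γ ^ 2) (by positivity)
    ((continuous_id.matrix_transpose.comp_continuousOn hΨ).mul hΨ) fun x hx => ?_
  calc ‖(Ψ x)ᵀ * Ψ x‖ = ‖Ψ x‖ * ‖Ψ x‖ := by
        rw [← Matrix.conjTranspose_eq_transpose_of_trivial,
          Matrix.l2_opNorm_conjTranspose_mul_self]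
    _ ≤ (γ * Real.exp (-lam * (x - a))) * (γ * Real.exp (-lam * (x - a))) :=
        mul_self_le_mul_self (norm_nonneg _) (hle x hx)
    _ = γ ^ 2 * Real.exp (-(2 * lam) * (x - a)) := by
        rw [mul_mul_mul_comm, ← Real.exp_add]
        ring_nf

theorem hasDerivWithinAt_integral_Ioi {E : Type*} [NormedAddCommGroup E] [NormedSpace ℝ E]
    [CompleteSpace E] {f : ℝ → E} {a t : ℝ} (hf : ContinuousOn f (Ici a))
    (hfi : IntegrableOn f (Ioi a)) (ht : t ∈ Ici a) :
    HasDerivWithinAt (fun s => ∫ x in Ioi s, f x) (-f t) (Ici a) t := by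
  have hsplit : ∀ s ∈ Ici a, ∫ x in Ioi s, f x = (∫ x in Ioi a, f x) - ∫ x in a..s, f x :=
    fun s hs => by rw [← intervalIntegral.integral_Ioi_sub_Ioi hfi hs, sub_sub_cancel]
  have : Fact (t ∈ Icc a (t + 1)) := ⟨⟨ht, by linarith⟩⟩
  have hIcc : ContinuousOn f (Icc a (t + 1)) := hf.mono Icc_subset_Ici_self
  have hFTC : HasDerivWithinAt (fun s => ∫ x in a..s, f x) (f t) (Icc a (t + 1)) t :=
    intervalIntegral.integral_hasDerivWithinAt_right
      ((hf.mono Icc_subset_Ici_self).intervalIntegrable_of_Icc ht)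
      (hIcc.stronglyMeasurableAtFilter_nhdsWithin measurableSet_Icc t)
      (hIcc t this.out)
  rw [← Ici_inter_Iic, hasDerivWithinAt_inter (Iic_mem_nhds (lt_add_one t))] at hFTC
  simpa only [zero_sub] using ((hasDerivWithinAt_const t (Ici a) _).sub hFTC).congr hsplit (hsplit t ht)

section Transition

variable {n : ℕ} {t₀ : ℝ} {A : ℝ → Matrix (Fin n) (Fin n) ℝ}
  {Φ : ℝ → ℝ → Matrix (Fin n) (Fin n) ℝ}

theorem transition_mul_transition (hA : ContinuousOn A (Ici t₀))
    (hΦ_deriv : ∀ τ ∈ Ici t₀, ∀ t ∈ Ici t₀,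
      HasDerivWithinAt (fun s => Φ s τ) (A t * Φ t τ) (Ici t₀) t)
    {r s u : ℝ} (hr : r ∈ Ici t₀) (hu : u ∈ Ici t₀) (hrs : r ≤ s) (hΦr : Φ r r = 1) :
    Φ s r * Φ r u = Φ s u := by
  have hIcc : Icc r s ⊆ Ici t₀ := Icc_subset_Ici_iff hrs |>.mpr hr
  refine eq_of_hasDerivWithinAt_mul_left (f := fun x => Φ x r * Φ r u) (g := fun x => Φ x u)
    (hA.mono hIcc) (fun x hx => ?_) (fun x hx => ?_) hrs (by rw [hΦr, one_mul])
  · simpa only [mul_assoc] using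
      ((hΦ_deriv r hr x (hIcc hx)).mul_const (Φ r u)).mono (Ici_subset_Ici.mpr hr)
  · exact (hΦ_deriv u hu x (hIcc hx)).mono (Ici_subset_Ici.mpr hr)

theorem transition_mul_transition_eq_one (hA : ContinuousOn A (Ici t₀))
    (hΦ_id : ∀ τ ∈ Ici t₀, Φ τ τ = 1)
    (hΦ_deriv : ∀ τ ∈ Ici t₀, ∀ t ∈ Ici t₀,
      HasDerivWithinAt (fun s => Φ s τ) (A t * Φ t τ) (Ici t₀) t)
    {u : ℝ} (hu : u ∈ Ici t₀) : Φ u t₀ * Φ t₀ u = 1 := by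
  rw [transition_mul_transition hA hΦ_deriv self_mem_Ici hu hu (hΦ_id t₀ self_mem_Ici), hΦ_id u hu]

theorem hasDerivWithinAt_transition_snd (hA : ContinuousOn A (Ici t₀))
    (hΦ_id : ∀ τ ∈ Ici t₀, Φ τ τ = 1)
    (hΦ_deriv : ∀ τ ∈ Ici t₀, ∀ t ∈ Ici t₀,
      HasDerivWithinAt (fun s => Φ s τ) (A t * Φ t τ) (Ici t₀) t)
    {t : ℝ} (ht : t ∈ Ici t₀) :
    HasDerivWithinAt (fun u => Φ t₀ u) (-(Φ t₀ t * A t)) (Ici t₀) t := by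
  have hmul := fun u (hu : u ∈ Ici t₀) => transition_mul_transition_eq_one hA hΦ_id hΦ_deriv hu
  have hmul' := fun u (hu : u ∈ Ici t₀) => mul_eq_one_comm.mp (hmul u hu)
  refine ((hΦ_deriv t₀ self_mem_Ici t ht).inverse_of_mul_eq_one hmul hmul' ht).congr_deriv ?_
  rw [mul_assoc, mul_assoc, hmul t ht, mul_one]

theorem Hmat_eq_transpose_mul_integral_mul (hA : ContinuousOn A (Ici t₀))
    (hΦ_deriv : ∀ τ ∈ Ici t₀, ∀ t ∈ Ici t₀,
      HasDerivWithinAt (fun s => Φ s τ) (A t * Φ t τ) (Ici t₀) t)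
    (hΦ₀ : Φ t₀ t₀ = 1) (hint : IntegrableOn (fun τ => (Φ τ t₀)ᵀ * Φ τ t₀) (Ioi t₀))
    {u : ℝ} (hu : u ∈ Ici t₀) :
    Hmat Φ u = (Φ t₀ u)ᵀ * (∫ τ in Ioi u, (Φ τ t₀)ᵀ * Φ τ t₀) * Φ t₀ u := by
  have hint_u := hint.mono_set (Ioi_subset_Ioi hu)
  rw [← integral_const_mul_of_integrable hint_u,
    ← integral_mul_const_of_integrable (hint_u.const_mul _)]
  refine setIntegral_congr_fun measurableSet_Ioi fun τ hτ => ?_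
  have hτ : τ ∈ Ici t₀ := Ici_subset_Ici.mpr hu (Ioi_subset_Ici_self hτ)
  rw [← transition_mul_transition hA hΦ_deriv self_mem_Ici hu hτ hΦ₀, Matrix.transpose_mul]
  noncomm_ring

end Transition

theorem stmt8_general {n : ℕ} (t₀ : ℝ) (A : ℝ → Matrix (Fin n) (Fin n) ℝ)
    (hA : ContinuousOn A (Ici t₀))
    (Φ : ℝ → ℝ → Matrix (Fin n) (Fin n) ℝ)
    (hΦ_id : ∀ τ ∈ Ici t₀, Φ τ τ = 1)
    (hΦ_deriv : ∀ τ ∈ Ici t₀, ∀ t ∈ Ici t₀,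
      HasDerivWithinAt (fun s => Φ s τ) (A t * Φ t τ) (Ici t₀) t)
    (γ lam : ℝ) (hlam : 0 < lam)
    (hUAS : ∀ τ ∈ Ici t₀, ∀ t ∈ Ici τ, ‖Φ t τ‖ ≤ γ * Real.exp (-lam * (t - τ))) :
    ∀ t ∈ Ici t₀,
      HasDerivWithinAt (Hmat Φ)
        (-(1 : Matrix (Fin n) (Fin n) ℝ) - (A t)ᵀ * Hmat Φ t - Hmat Φ t * A t)
        (Ici t₀) t := by
  intro t ht
  have hΦ₀ := hΦ_id t₀ self_mem_Ici
  have hΨ : ContinuousOn (fun τ => Φ τ t₀) (Ici t₀) := fun τ hτ =>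
    (hΦ_deriv t₀ self_mem_Ici τ hτ).continuousWithinAt
  have hcont : ContinuousOn (fun τ => (Φ τ t₀)ᵀ * Φ τ t₀) (Ici t₀) :=
    (continuous_id.matrix_transpose.comp_continuousOn hΨ).mul hΨ
  have hint := integrableOn_transpose_mul_self_of_norm_le_exp_s8 hlam hΨ (hUAS t₀ self_mem_Ici)
  have hG := hasDerivWithinAt_integral_Ioi hcont hint ht
  have hB := hasDerivWithinAt_transition_snd hA hΦ_id hΦ_deriv ht
  have hH := fun u (hu : u ∈ Ici t₀) => Hmat_eq_transpose_mul_integral_mul hA hΦ_deriv hΦ₀ hint hu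
  refine ((hB.matrix_transpose.mul hG).mul hB |>.congr hH (hH t ht)).congr_deriv ?_
  have hBΨ : Φ t t₀ * Φ t₀ t = 1 := transition_mul_transition_eq_one hA hΦ_id hΦ_deriv ht
  have hgram : (Φ t₀ t)ᵀ * ((Φ t t₀)ᵀ * Φ t t₀) * Φ t₀ t = 1 :=
    calc _ = (Φ t t₀ * Φ t₀ t)ᵀ * (Φ t t₀ * Φ t₀ t) := by
            rw [Matrix.transpose_mul]; noncomm_ring
      _ = 1 := by rw [hBΨ, Matrix.transpose_one, one_mul]
  rw [hH t ht, ← hgram, Matrix.transpose_neg, Matrix.transpose_mul, Pi.mul_apply]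
  noncomm_ring

/-- for a uniformly asymptotically stable system, `H` is differentiable on
`[t₀,∞)` and satisfies the Lyapunov differential equation
`Ḣ(t) + A(t)ᵀ H(t) + H(t) A(t) = −I`, i.e. `Ḣ(t) = −I − A(t)ᵀ H(t) − H(t) A(t)`. -/
theorem stmt8 {n : ℕ} (t₀ : ℝ) (A : ℝ → Matrix (Fin n) (Fin n) ℝ)
    (hA : ContinuousOn A (Ici t₀))
    (Φ : ℝ → ℝ → Matrix (Fin n) (Fin n) ℝ)
    (hΦ_id : ∀ τ ∈ Ici t₀, Φ τ τ = 1)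
    (hΦ_deriv : ∀ τ ∈ Ici t₀, ∀ t ∈ Ici t₀,
      HasDerivWithinAt (fun s => Φ s τ) (A t * Φ t τ) (Ici t₀) t)
    (γ lam : ℝ) (hγ : 0 < γ) (hlam : 0 < lam)
    (hUAS : ∀ τ ∈ Ici t₀, ∀ t ∈ Ici τ, ‖Φ t τ‖ ≤ γ * Real.exp (-lam * (t - τ))) :
    ∀ t ∈ Ici t₀,
      HasDerivWithinAt (Hmat Φ)
        (-(1 : Matrix (Fin n) (Fin n) ℝ) - (A t)ᵀ * Hmat Φ t - Hmat Φ t * A t)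
        (Ici t₀) t :=
  stmt8_general t₀ A hA Φ hΦ_id hΦ_deriv γ lam hlam hUAS
end

section
/- Let A be the constant 2×2 matrix with rows (0, √10) and (−√10, −2). Then every solution x of ẋ = Ax satisfies ‖x(0)‖_I · e^{−2t} ≤ ‖x(t)‖_I ≤ ‖x(0)‖_I for all t ≥ 0. -/
open scoped Matrix
open Set

/-- The Euclidean norm on `ℝ²` (denoted `‖·‖_I` in the paper). -/
noncomputable def euclNorm {n : ℕ} (x : Fin n → ℝ) : ℝ :=
  Real.sqrt (x ⬝ᵥ x)

/-! The squared norm `N = x ⬝ᵥ x` of a solution satisfies `N' = 2 x ⬝ᵥ A x = -4 x₁²`, so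
`-4 N ≤ N' ≤ 0`: `N` is antitone and `N e^{4t}` is monotone. Taking square roots gives
both bounds. -/

open Real

theorem HasDerivWithinAt.dotProduct_self {ι : Type*} [Fintype ι] {x : ℝ → ι → ℝ} {x' : ι → ℝ}
    {s : Set ℝ} {t : ℝ} (hx : HasDerivWithinAt x x' s t) :
    HasDerivWithinAt (fun u ↦ x u ⬝ᵥ x u) (2 * (x t ⬝ᵥ x')) s t := by
  have hcoord (i : ι) : HasDerivWithinAt (fun u ↦ x u i * x u i) (2 * (x t i * x' i)) s t :=
    ((hasDerivWithinAt_pi.mp hx i).fun_mul (hasDerivWithinAt_pi.mp hx i)).congr_deriv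
      (by ring)
  simpa only [dotProduct, Finset.mul_sum] using HasDerivWithinAt.fun_sum fun i _ ↦ hcoord i

section HalfLine

variable {f f' : ℝ → ℝ} {a : ℝ}

theorem monotoneOn_Ici_of_hasDerivWithinAt_nonneg
    (hf : ∀ t ∈ Ici a, HasDerivWithinAt f (f' t) (Ici a) t) (hf' : ∀ t ∈ Ici a, 0 ≤ f' t) :
    MonotoneOn f (Ici a) := by
  refine monotoneOn_of_hasDerivWithinAt_nonneg (f' := f') (convex_Ici a)
    (fun t ht ↦ (hf t ht).continuousWithinAt) ?_ ?_ <;> rw [interior_Ici]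
  · exact fun t ht ↦ (hf t (mem_Ioi.mp ht).le).mono Ioi_subset_Ici_self
  · exact fun t ht ↦ hf' t (mem_Ioi.mp ht).le

theorem antitoneOn_Ici_of_hasDerivWithinAt_nonpos
    (hf : ∀ t ∈ Ici a, HasDerivWithinAt f (f' t) (Ici a) t) (hf' : ∀ t ∈ Ici a, f' t ≤ 0) :
    AntitoneOn f (Ici a) := by
  have := monotoneOn_Ici_of_hasDerivWithinAt_nonneg (fun t ht ↦ (hf t ht).neg)
    (fun t ht ↦ neg_nonneg.mpr (hf' t ht))
  exact fun s hs t ht hst ↦ neg_le_neg_iff.mp (this hs ht hst)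

theorem mul_exp_le_of_hasDerivWithinAt_ge {c : ℝ}
    (hf : ∀ t ∈ Ici a, HasDerivWithinAt f (f' t) (Ici a) t) (hf' : ∀ t ∈ Ici a, c * f t ≤ f' t) :
    ∀ t ∈ Ici a, f a * exp (c * (t - a)) ≤ f t := by
  set g : ℝ → ℝ := fun t ↦ f t * exp (-(c * (t - a)))
  have hg (t : ℝ) (ht : t ∈ Ici a) :
      HasDerivWithinAt g ((f' t - c * f t) * exp (-(c * (t - a)))) (Ici a) t := by
    have he : HasDerivWithinAt (fun u ↦ exp (-(c * (u - a)))) (exp (-(c * (t - a))) * -c)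
        (Ici a) t := by
      simpa using (((hasDerivWithinAt_id t (Ici a)).sub_const a).const_mul c).neg.exp
    exact ((hf t ht).fun_mul he).congr_deriv (by ring)
  have hmono := monotoneOn_Ici_of_hasDerivWithinAt_nonneg hg
    fun t ht ↦ mul_nonneg (sub_nonneg.mpr (hf' t ht)) (exp_nonneg _)
  intro t ht
  have := hmono self_mem_Ici ht ht
  simp only [g, sub_self, mul_zero, neg_zero, exp_zero, mul_one] at this
  calc f a * exp (c * (t - a)) ≤ f t * exp (-(c * (t - a))) * exp (c * (t - a)) := by gcongr
    _ = f t := by rw [mul_assoc, ← exp_add, neg_add_cancel, exp_zero, mul_one]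

end HalfLine

section LinearODE

variable {ι : Type*} [Fintype ι] {A : Matrix ι ι ℝ} {x : ℝ → ι → ℝ} {a : ℝ}

theorem antitoneOn_dotProduct_self_of_dotProduct_mulVec_nonpos
    (hA : ∀ v, v ⬝ᵥ (A *ᵥ v) ≤ 0) (hx : ∀ t ∈ Ici a, HasDerivWithinAt x (A *ᵥ x t) (Ici a) t) :
    AntitoneOn (fun t ↦ x t ⬝ᵥ x t) (Ici a) :=
  antitoneOn_Ici_of_hasDerivWithinAt_nonpos (fun t ht ↦ (hx t ht).dotProduct_self)
    fun t _ ↦ by nlinarith [hA (x t)]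

theorem dotProduct_self_mul_exp_le_of_le_dotProduct_mulVec {c : ℝ}
    (hA : ∀ v, c * (v ⬝ᵥ v) ≤ v ⬝ᵥ (A *ᵥ v))
    (hx : ∀ t ∈ Ici a, HasDerivWithinAt x (A *ᵥ x t) (Ici a) t) :
    ∀ t ∈ Ici a, x a ⬝ᵥ x a * exp (2 * c * (t - a)) ≤ x t ⬝ᵥ x t :=
  mul_exp_le_of_hasDerivWithinAt_ge (fun t ht ↦ (hx t ht).dotProduct_self)
    fun t _ ↦ by nlinarith [hA (x t)]

end LinearODE

theorem dotProduct_mulVec_sqrt_ten_matrix (v : Fin 2 → ℝ) :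
    v ⬝ᵥ (!![0, √10; -√10, -2] *ᵥ v) = -2 * v 1 ^ 2 := by
  simp only [dotProduct, Matrix.mulVec, Fin.sum_univ_two, Matrix.of_apply, Matrix.cons_val',
    Matrix.cons_val_zero, Matrix.cons_val_one, Matrix.empty_val', Matrix.cons_val_fin_one]
  ring

/-- for `A = !![0, √10; −√10, −2]`, every solution `x` of `ẋ = Ax` satisfies
`‖x(0)‖ e^{−2t} ≤ ‖x(t)‖ ≤ ‖x(0)‖` for all `t ≥ 0`. -/
theorem stmt15
    (A : Matrix (Fin 2) (Fin 2) ℝ)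
    (hA : A = !![0, Real.sqrt 10; -Real.sqrt 10, -2])
    (x : ℝ → Fin 2 → ℝ)
    (hx : ∀ t ∈ Ici (0 : ℝ), HasDerivWithinAt x (A *ᵥ x t) (Ici (0 : ℝ)) t) :
    ∀ t ∈ Ici (0 : ℝ),
      euclNorm (x 0) * Real.exp (-2 * t) ≤ euclNorm (x t) ∧
      euclNorm (x t) ≤ euclNorm (x 0) := by
  subst hA
  have hdecay := antitoneOn_dotProduct_self_of_dotProduct_mulVec_nonpos
    (fun v ↦ by rw [dotProduct_mulVec_sqrt_ten_matrix]; nlinarith [sq_nonneg (v 1)]) hx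
  have hgrowth := dotProduct_self_mul_exp_le_of_le_dotProduct_mulVec (c := -2)
    (fun v ↦ by
      rw [dotProduct_mulVec_sqrt_ten_matrix]
      simp only [dotProduct, Fin.sum_univ_two]
      nlinarith [sq_nonneg (v 0)]) hx
  intro t ht
  refine ⟨?_, sqrt_le_sqrt (hdecay self_mem_Ici ht ht)⟩
  calc euclNorm (x 0) * exp (-2 * t) = √(x 0 ⬝ᵥ x 0 * exp (2 * -2 * (t - 0))) := by
        rw [sqrt_mul' _ (exp_nonneg _), show 2 * -2 * (t - 0) = -2 * t + -2 * t by ring, exp_add,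
          sqrt_mul_self (exp_nonneg _), euclNorm]
    _ ≤ euclNorm (x t) := sqrt_le_sqrt (hgrowth t ht)
end
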